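/- Let (Ω, F, P) be a probability space with a finite filtration (F_j)_{j=0}^{N}, let X_j ≥ 0 be F_j-measurable and integrable, and for δ > 0 let A_{j,δ} = {Σ_{j'=1}^{j} E[X_{j'} | F_{j'-1}] ≤ δ}. Then E[Σ_{j=1}^{N} X_j · 1_{A_{N,δ}}] ≤ E[(Σ_{j=1}^{N} E[X_j | F_{j-1}]) ∧ δ]. -/

import Mathlib

/-!
Write `Y j = E[X j | F (j-1)]` and `A j = {Y 1 + ⋯ + Y j ≤ δ}`. Since `Y ≥ 0`, the events `A j`
decrease, so `∫_{A N} X j ≤ ∫_{A j} X j`, and `A j` is `F (j-1)`-measurable, so the latter equals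
`∫_{A j} Y j`. It remains to see that `∑ j, 1_{A j} Y j ≤ (∑ j, Y j) ∧ δ` pointwise: the indices
kept by the indicators form an initial segment whose partial sum is at most `δ`.
-/

open MeasureTheory

lemma sum_Icc_ite_partialSum_le_min {δ : ℝ} (hδ : 0 ≤ δ) {y : ℕ → ℝ} (N : ℕ)
    (hy : ∀ j ∈ Finset.Icc 1 N, 0 ≤ y j) :
    ∑ j ∈ Finset.Icc 1 N, (if ∑ i ∈ Finset.Icc 1 j, y i ≤ δ then y j else 0)
      ≤ min (∑ j ∈ Finset.Icc 1 N, y j) δ := by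
  induction N with
  | zero => simp [hδ]
  | succ n ih =>
    have hy' : ∀ j ∈ Finset.Icc 1 n, 0 ≤ y j := fun j hj =>
      hy j (Finset.Icc_subset_Icc_right n.le_succ hj)
    have hkept_le : (∑ j ∈ Finset.Icc 1 n, if ∑ i ∈ Finset.Icc 1 j, y i ≤ δ then y j else 0)
        ≤ ∑ j ∈ Finset.Icc 1 n, y j :=
      Finset.sum_le_sum fun j hj => by split_ifs <;> simp [hy' j hj]
    have hlast : 0 ≤ y (n + 1) := hy (n + 1) (by simp)
    rw [Finset.sum_Icc_succ_top (by omega), Finset.sum_Icc_succ_top (by omega)]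
    split_ifs with h
    · exact le_min (by linarith) (by linarith)
    · exact (add_zero _).trans_le ((ih hy').trans (min_le_min (by linarith) le_rfl))

lemma setIntegral_le_setIntegral_condExp {Ω : Type*} {m m₀ : MeasurableSpace Ω}
    {μ : Measure Ω} [IsFiniteMeasure μ] (hm : m ≤ m₀) {f : Ω → ℝ} (hf : Integrable f μ)
    (hf_nonneg : 0 ≤ᵐ[μ] f) {s t : Set Ω} (hst : s ≤ᵐ[μ] t) (ht : MeasurableSet[m] t) :
    ∫ ω in s, f ω ∂μ ≤ ∫ ω in t, μ[f | m] ω ∂μ :=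
  (setIntegral_mono_set hf.integrableOn (ae_restrict_of_ae hf_nonneg) hst).trans_eq
    (setIntegral_condExp hm hf ht).symm

section Compensator

variable {Ω : Type*} [MeasurableSpace Ω]

noncomputable def compensator (P : Measure Ω) (F : ℕ → MeasurableSpace Ω) (X : ℕ → Ω → ℝ)
    (j : ℕ) (ω : Ω) : ℝ :=
  ∑ i ∈ Finset.Icc 1 j, (P[X i | F (i - 1)]) ω

variable {P : Measure Ω} {F : ℕ → MeasurableSpace Ω} {X : ℕ → Ω → ℝ}

lemma stronglyMeasurable_compensator (hF_mono : Monotone F) (j : ℕ) :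
    StronglyMeasurable[F (j - 1)] (compensator P F X j) := by
  unfold compensator
  refine Finset.stronglyMeasurable_fun_sum _ fun i hi => ?_
  exact stronglyMeasurable_condExp.mono (hF_mono (by simp at hi; omega))

lemma measurableSet_compensator_le (hF_mono : Monotone F) (j : ℕ) (δ : ℝ) :
    MeasurableSet[F (j - 1)] {ω | compensator P F X j ω ≤ δ} :=
  measurableSet_le (stronglyMeasurable_compensator hF_mono j).measurable measurable_const

lemma condExp_nonneg_ae_forall (hX_nonneg : ∀ j, 0 ≤ᵐ[P] X j) :
    ∀ᵐ ω ∂P, ∀ j, 0 ≤ (P[X j | F (j - 1)]) ω :=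
  ae_all_iff.2 fun j => condExp_nonneg (hX_nonneg j)

lemma compensator_le_of_le_ae (hX_nonneg : ∀ j, 0 ≤ᵐ[P] X j) {j k : ℕ} (hjk : j ≤ k) :
    compensator P F X j ≤ᵐ[P] compensator P F X k := by
  filter_upwards [condExp_nonneg_ae_forall (F := F) hX_nonneg] with ω hω
  exact Finset.sum_le_sum_of_subset_of_nonneg (Finset.Icc_subset_Icc_right hjk)
    fun i _ _ => hω i

end Compensator

theorem stmt_2_general
    (Ω : Type*) [MeasurableSpace Ω] (P : Measure Ω) [IsProbabilityMeasure P]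
    (N : ℕ) (F : ℕ → MeasurableSpace Ω)
    (hF_mono : Monotone F)
    (hF_le : ∀ j, F j ≤ (inferInstance : MeasurableSpace Ω))
    (X : ℕ → Ω → ℝ)
    (hX_nonneg : ∀ j ω, 0 ≤ X j ω)
    (hX_int : ∀ j ∈ Finset.Icc 1 N, Integrable (X j) P)
    (δ : ℝ) (hδ : 0 < δ) :
    ∫ ω in {ω | ∑ j ∈ Finset.Icc 1 N, (P[X j | F (j - 1)]) ω ≤ δ},
        (∑ j ∈ Finset.Icc 1 N, X j ω) ∂P
      ≤ ∫ ω, min (∑ j ∈ Finset.Icc 1 N, (P[X j | F (j - 1)]) ω) δ ∂P := by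
  set Y : ℕ → Ω → ℝ := fun j => P[X j | F (j - 1)]
  set A : ℕ → Set Ω := fun j => {ω | compensator P F X j ω ≤ δ}
  have hX_nonneg_ae : ∀ j, 0 ≤ᵐ[P] X j := fun j => .of_forall (hX_nonneg j)
  have hA_meas : ∀ j, MeasurableSet (A j) := fun j =>
    hF_le (j - 1) _ (measurableSet_compensator_le hF_mono j δ)
  have hAN_le : ∀ j ∈ Finset.Icc 1 N, A N ≤ᵐ[P] A j := fun j hj => by
    filter_upwards [compensator_le_of_le_ae (F := F) hX_nonneg_ae (Finset.mem_Icc.1 hj).2]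
      with ω hω hN using hω.trans hN
  have hYA_int : ∀ j, Integrable ((A j).indicator (Y j)) P := fun j =>
    integrable_condExp.indicator (hA_meas j)
  calc ∫ ω in A N, ∑ j ∈ Finset.Icc 1 N, X j ω ∂P
      = ∑ j ∈ Finset.Icc 1 N, ∫ ω in A N, X j ω ∂P :=
        integral_finsetSum _ fun j hj => (hX_int j hj).integrableOn
    _ ≤ ∑ j ∈ Finset.Icc 1 N, ∫ ω, (A j).indicator (Y j) ω ∂P :=
        Finset.sum_le_sum fun j hj => by
          rw [integral_indicator (hA_meas j)]
          exact setIntegral_le_setIntegral_condExp (hF_le (j - 1)) (hX_int j hj) (hX_nonneg_ae j)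
            (hAN_le j hj) (measurableSet_compensator_le hF_mono j δ)
    _ = ∫ ω, ∑ j ∈ Finset.Icc 1 N, (A j).indicator (Y j) ω ∂P :=
        (integral_finsetSum _ fun j _ => hYA_int j).symm
    _ ≤ ∫ ω, min (∑ j ∈ Finset.Icc 1 N, Y j ω) δ ∂P := by
        refine integral_mono_ae (integrable_finsetSum _ fun j _ => hYA_int j)
          ((integrable_finsetSum _ fun j _ => integrable_condExp).inf (integrable_const δ)) ?_
        filter_upwards [condExp_nonneg_ae_forall (F := F) hX_nonneg_ae] with ω hω
        simpa only [Set.indicator_apply, A, Set.mem_ofPred_eq, compensator] using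
          sum_Icc_ite_partialSum_le_min hδ.le N (y := fun j => Y j ω) fun j _ => hω j

/-- Key estimate: the integral of the sum of nonnegative adapted variables over the event
where the sum of their conditional expectations is at most `δ` is bounded by the
expectation of the minimum of that sum with `δ`. -/
theorem stmt_2
    (Ω : Type*) [MeasurableSpace Ω] (P : Measure Ω) [IsProbabilityMeasure P]
    (N : ℕ) (F : ℕ → MeasurableSpace Ω)
    (hF_mono : Monotone F)
    (hF_le : ∀ j, F j ≤ (inferInstance : MeasurableSpace Ω))
    (X : ℕ → Ω → ℝ)
    (hX_nonneg : ∀ j ω, 0 ≤ X j ω)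
    (hX_meas : ∀ j ∈ Finset.Icc 1 N, Measurable[F j] (X j))
    (hX_int : ∀ j ∈ Finset.Icc 1 N, Integrable (X j) P)
    (δ : ℝ) (hδ : 0 < δ) :
    ∫ ω in {ω | ∑ j ∈ Finset.Icc 1 N, (P[X j | F (j - 1)]) ω ≤ δ},
        (∑ j ∈ Finset.Icc 1 N, X j ω) ∂P
      ≤ ∫ ω, min (∑ j ∈ Finset.Icc 1 N, (P[X j | F (j - 1)]) ω) δ ∂P :=
  stmt_2_general Ω P N F hF_mono hF_le X hX_nonneg hX_int δ hδ
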